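/- Let E be a finite set and Q an E×E matrix with ‖Q‖ < 1 such that I − Q is invertible and a determinantal probability measure P^Q with kernel Q exists. Setting J := Q(I−Q)^{-1}, for every A ⊆ E we have P^Q[𝔄 = A] = det(I−Q) · det(J↾A). -/

import Mathlib

/-!
Writing `f B = det(Q↾B) = ∑_{C ⊇ B} p C`, Möbius inversion on the Boolean lattice gives
`(-1)^|A| p A = ∑_{B ⊇ A} (-1)^|B| det(Q↾B)`. Expanding the determinant row by row, the right-hand
side is `det(I_{Aᶜ} - Q)`, where `I_{Aᶜ}` is the diagonal indicator of `E \ A`. Finally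
`I_{Aᶜ} - Q = (I - I_A (I-Q)⁻¹)(I - Q)`; the first factor has unit rows off `A` and equals
`-J` on `A`, since `J = Q(I-Q)⁻¹ = (I-Q)⁻¹ - I`.
-/

open Matrix Finset

local notation:max M:max "↾" S:max =>
  Matrix.submatrix M (fun a : S => Subtype.val a) (fun a : S => Subtype.val a)

section

variable {E R : Type*} [DecidableEq E] [CommRing R]

theorem det_eq_det_submatrix_of_row_eq_one_row [Fintype E] (S : Finset E) (M : Matrix E E R)
    (h : ∀ i ∉ S, M i = (1 : Matrix E E R) i) : M.det = (M↾S).det := by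
  rw [← det_piecewise_one_eq_submatrix_det]
  congr
  ext i : 1
  by_cases hi : i ∈ S <;> simp [hi, h]

theorem det_add_diagonal [Fintype E] (N : Matrix E E R) (c : E → R) :
    (N + diagonal c).det = ∑ S : Finset E, (∏ i ∈ Sᶜ, c i) * (N↾S).det := by
  have hdet : (N + diagonal c).det = detRowAlternating.toMultilinearMap
      ((N.row + fun i => c i • (1 : Matrix E E R).row i) : E → E → R) := by
    refine congrArg detRowAlternating (funext₂ fun i j => ?_)
    simp [diagonal_apply, one_apply]
  rw [hdet, MultilinearMap.map_add_univ]
  refine sum_congr rfl fun S _ => ?_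
  have hpw : S.piecewise N.row (fun i => c i • (1 : Matrix E E R).row i)
      = Sᶜ.piecewise (fun i => c i • S.piecewise N.row (1 : Matrix E E R).row i)
          (S.piecewise N.row (1 : Matrix E E R).row) := by
    ext i : 1
    by_cases hi : i ∈ S <;> simp [hi, piecewise_eq_of_mem, piecewise_eq_of_notMem]
  rw [hpw, MultilinearMap.map_piecewise_smul, smul_eq_mul, ← det_piecewise_one_eq_submatrix_det]
  rfl

theorem sum_Icc_neg_one_pow_card (A C : Finset E) :
    ∑ B ∈ Icc A C, (-1 : R) ^ #B = if A = C then (-1) ^ #A else 0 := by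
  by_cases hAC : A ⊆ C
  · have hdisj : ∀ D ∈ (C \ A).powerset, Disjoint A D := fun D hD =>
      disjoint_sdiff.mono_right (mem_powerset.1 hD)
    rw [Icc_eq_image_powerset hAC, sum_image fun D hD D' hD' h => by
      rw [← union_sdiff_cancel_left (hdisj D hD), ← union_sdiff_cancel_left (hdisj D' hD')]
      exact congrArg (· \ A) h]
    have hsum : ∑ D ∈ (C \ A).powerset, (-1 : R) ^ #D = if C \ A = ∅ then 1 else 0 := by
      exact_mod_cast congrArg (Int.cast : ℤ → R) sum_powerset_neg_one_pow_card
    rw [sum_congr rfl fun D hD => by rw [card_union_of_disjoint (hdisj D hD), pow_add],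
      ← mul_sum, hsum, mul_ite, mul_one, mul_zero]
    refine if_congr ?_ rfl rfl
    rw [sdiff_eq_empty_iff_subset]
    exact ⟨subset_antisymm hAC, fun h => h ▸ subset_rfl⟩
  · rw [Icc_eq_empty hAC, if_neg (by rintro rfl; exact hAC subset_rfl), sum_empty]

theorem sum_superset_neg_one_pow_card_mul [Fintype E] {p f : Finset E → R}
    (hf : ∀ B, f B = ∑ C ∈ univ.filter (B ⊆ ·), p C) (A : Finset E) :
    ∑ B ∈ univ.filter (A ⊆ ·), (-1) ^ #B * f B = (-1) ^ #A * p A := by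
  calc ∑ B ∈ univ.filter (A ⊆ ·), (-1) ^ #B * f B
      = ∑ C, ∑ B ∈ Icc A C, (-1 : R) ^ #B * p C := by
        simp_rw [hf, mul_sum]
        exact sum_comm' fun B C => by simp [and_comm]
    _ = (-1) ^ #A * p A := by simp [← sum_mul, sum_Icc_neg_one_pow_card]

theorem det_diagonal_indicator_compl_sub_eq_sum [Fintype E] (Q : Matrix E E R) (A : Finset E) :
    (diagonal (fun i => if i ∈ A then 0 else 1) - Q).det
      = ∑ B ∈ univ.filter (A ⊆ ·), (-1) ^ #B * (Q↾B).det := by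
  rw [sub_eq_neg_add, det_add_diagonal, sum_filter]
  refine sum_congr rfl fun B _ => ?_
  rw [submatrix_neg, Pi.neg_apply, Pi.neg_apply, det_neg, Fintype.card_coe]
  split_ifs with hAB
  · rw [prod_eq_one fun i hi => if_neg fun hiA => mem_compl.1 hi (hAB hiA), one_mul]
  · obtain ⟨i, hiA, hiB⟩ := not_subset.1 hAB
    rw [prod_eq_zero (mem_compl.2 hiB) (by simp [hiA]), zero_mul]

theorem det_diagonal_indicator_compl_sub_eq_det_mul [Fintype E] (Q : Matrix E E R) (A : Finset E)
    (hQ : IsUnit (1 - Q).det) :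
    (diagonal (fun i => if i ∈ A then 0 else 1) - Q).det
      = (-1) ^ #A * ((1 - Q).det * ((Q * (1 - Q)⁻¹)↾A).det) := by
  set D : Matrix E E R := diagonal fun i => if i ∈ A then 1 else 0
  set M := 1 - D * (1 - Q)⁻¹
  have hJ : Q * (1 - Q)⁻¹ = (1 - Q)⁻¹ - 1 := by
    calc Q * (1 - Q)⁻¹ = (1 - (1 - Q)) * (1 - Q)⁻¹ := by rw [sub_sub_cancel]
      _ = (1 - Q)⁻¹ - 1 := by rw [sub_mul, one_mul, mul_nonsing_inv _ hQ]
  have hfac : diagonal (fun i => if i ∈ A then 0 else 1) - Q = M * (1 - Q) := by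
    rw [sub_mul, one_mul, mul_assoc, nonsing_inv_mul _ hQ, mul_one, sub_sub, add_comm, ← sub_sub]
    congr 1
    ext i j
    by_cases hi : i ∈ A <;> simp [D, diagonal_apply, one_apply, hi]
  have hrows : ∀ i ∉ A, M i = (1 : Matrix E E R) i := fun i hi => by
    ext j
    simp [M, D, diagonal_mul, hi]
  have hsub : M↾A = -((Q * (1 - Q)⁻¹)↾A) := by
    ext i j
    simp [M, D, diagonal_mul, hJ, i.2]
  rw [hfac, det_mul, det_eq_det_submatrix_of_row_eq_one_row A M hrows, hsub, det_neg,
    Fintype.card_coe]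
  ring

end

theorem stmt6_general {E : Type*} [Fintype E] [DecidableEq E] (Q : Matrix E E ℝ)
    (hIQ : (1 - Q).PosDef)
    (p : Finset E → ℝ)
    (hd : ∀ A : Finset E, ∑ B ∈ Finset.univ.filter (fun B => A ⊆ B), p B
      = (Q.submatrix (fun a : A => (a : E)) (fun a : A => (a : E))).det)
    (A : Finset E) :
    p A = (1 - Q).det *
        ((Q * (1 - Q)⁻¹).submatrix (fun a : A => (a : E)) (fun a : A => (a : E))).det := by
  have hinversion := sum_superset_neg_one_pow_card_mul (fun B => (hd B).symm) A
  rw [← det_diagonal_indicator_compl_sub_eq_sum,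
    det_diagonal_indicator_compl_sub_eq_det_mul Q A hIQ.det_pos.ne'.isUnit] at hinversion
  exact mul_left_cancel₀ (pow_ne_zero _ (neg_ne_zero.2 one_ne_zero)) hinversion.symm

/-- If `Q` is a symmetric positive-semidefinite matrix with `I − Q` positive definite
(all eigenvalues in `[0,1)`), and `P^Q` is determinantal with kernel `Q`, then with
`J := Q(I−Q)⁻¹` we have `P^Q[𝔄 = A] = det(I−Q) · det(J↾A)` for every `A ⊆ E`. -/
theorem stmt6 {E : Type*} [Fintype E] [DecidableEq E] (Q : Matrix E E ℝ)
    (hQ : Q.PosSemidef) (hIQ : (1 - Q).PosDef)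
    (p : Finset E → ℝ)
    (h0 : ∀ B, 0 ≤ p B) (h1 : ∑ B : Finset E, p B = 1)
    (hd : ∀ A : Finset E, ∑ B ∈ Finset.univ.filter (fun B => A ⊆ B), p B
      = (Q.submatrix (fun a : A => (a : E)) (fun a : A => (a : E))).det)
    (A : Finset E) :
    p A = (1 - Q).det *
        ((Q * (1 - Q)⁻¹).submatrix (fun a : A => (a : E)) (fun a : A => (a : E))).det :=
  stmt6_general Q hIQ p hd A
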